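/- arXiv:1901.02011 — 6 statements merged into one kernel-verified Lean document; each statement's English description precedes it below -/
import Mathlib

section
/- Let ρ_AB be a density state on H_A ⊗ H_B, s_AB its support projection, and let (a,b) ∈ End(H_A) × End(H_B). If (a ⊗ 1_B − 1_A ⊗ b)·s_AB = 0, then Tr(ρ_A a) = Tr(ρ_B b), and moreover Cov(a,b) = Var_A(a) = Var_B(b), where Cov and Var are the covariance and variances defined via ρ_AB, ρ_A, ρ_B with mean-subtracted operators. -/
open Matrix Kronecker
open ComplexOrder

/-- `s` is the support projection (the orthogonal projection onto the image) of `ρ`: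
it is a Hermitian idempotent acting as the identity on the range of `ρ` and
vanishing on its kernel. -/
def IsSuppProj {n : Type*} [Fintype n] (s ρ : Matrix n n ℂ) : Prop :=
  s.IsHermitian ∧ s * s = s ∧ s * ρ = ρ ∧ ∀ v : n → ℂ, ρ.mulVec v = 0 → s.mulVec v = 0

/-- A density state: a positive semidefinite operator of unit trace. -/
def IsDensity {n : Type*} [Fintype n] (ρ : Matrix n n ℂ) : Prop :=
  ρ.PosSemidef ∧ ρ.trace = 1

/-- Partial trace over the second (`B`) tensor factor. -/
noncomputable def traceRight {a b : Type*} [Fintype b] (M : Matrix (a × b) (a × b) ℂ) : Matrix a a ℂ :=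
  Matrix.of fun i j => ∑ k, M (i, k) (j, k)

/-- Partial trace over the first (`A`) tensor factor. -/
noncomputable def traceLeft {a b : Type*} [Fintype a] (M : Matrix (a × b) (a × b) ℂ) : Matrix b b ℂ :=
  Matrix.of fun i j => ∑ k, M (k, i) (k, j)

/-!
Since `s_AB ρ_AB = ρ_AB`, the kernel condition says `X ρ_AB = Y ρ_AB` for `X = a ⊗ 1` and
`Y = 1 ⊗ b`. Cyclicity of the trace turns this into equal means, and the centred operators
`X'`, `Y'` still satisfy `X' ρ_AB = Y' ρ_AB`, because centring subtracts the same multiple of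
the identity from both. In `Cov = Tr(ρ_AB X'* Y')` one may then replace `Y'` by `X'` (cyclicity)
or, as `ρ_AB` is Hermitian, `X'*` by `Y'*`; the partial traces reduce the two results to
`Var_A(a)` and `Var_B(b)`.
-/

namespace Matrix

section Trace

variable {n R : Type*} [Fintype n] [CommSemiring R]

theorem trace_mul_eq_of_mul_eq {X Y ρ : Matrix n n R} (h : X * ρ = Y * ρ) :
    (ρ * X).trace = (ρ * Y).trace := by
  rw [trace_mul_comm, h, trace_mul_comm]

variable [StarRing R]

theorem trace_mul_conjTranspose_mul_eq_left {X Y ρ : Matrix n n R} (h : X * ρ = Y * ρ) :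
    (ρ * Xᴴ * Y).trace = (ρ * Xᴴ * X).trace := by
  rw [trace_mul_cycle, ← h, ← trace_mul_cycle]

theorem trace_mul_conjTranspose_mul_eq_right {X Y ρ : Matrix n n R} (hρ : ρ.IsHermitian)
    (h : X * ρ = Y * ρ) : (ρ * Xᴴ * Y).trace = (ρ * Yᴴ * Y).trace := by
  have h' : ρ * Xᴴ = ρ * Yᴴ := by
    simpa only [conjTranspose_mul, hρ.eq] using congrArg conjTranspose h
  rw [h']

end Trace

section Kronecker

variable {a b R : Type*} [DecidableEq a] [DecidableEq b] [CommRing R]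

theorem sub_smul_one_kronecker_one (x : Matrix a a R) (c : R) :
    (x - c • 1) ⊗ₖ (1 : Matrix b b R) = x ⊗ₖ 1 - c • 1 := by
  ext ⟨i, k⟩ ⟨j, l⟩
  by_cases hkl : k = l <;> simp [one_apply, hkl]

theorem one_kronecker_sub_smul_one (y : Matrix b b R) (c : R) :
    (1 : Matrix a a R) ⊗ₖ (y - c • 1) = 1 ⊗ₖ y - c • 1 := by
  ext ⟨i, k⟩ ⟨j, l⟩
  by_cases hij : i = j <;> simp [one_apply, hij]

end Kronecker

end Matrix

section PartialTrace

variable {a b : Type*} [Fintype a] [Fintype b]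

theorem trace_mul_kronecker_one [DecidableEq b] (ρ : Matrix (a × b) (a × b) ℂ)
    (x : Matrix a a ℂ) :
    (ρ * (x ⊗ₖ (1 : Matrix b b ℂ))).trace = (traceRight ρ * x).trace := by
  simp only [trace, diag, mul_apply, traceRight, of_apply, kronecker_apply, one_apply,
    Fintype.sum_prod_type, mul_ite, mul_one, mul_zero, Finset.sum_ite_eq', Finset.mem_univ,
    if_true, Finset.sum_mul]
  exact Finset.sum_congr rfl fun _ _ => Finset.sum_comm

theorem trace_mul_one_kronecker [DecidableEq a] (ρ : Matrix (a × b) (a × b) ℂ)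
    (y : Matrix b b ℂ) :
    (ρ * ((1 : Matrix a a ℂ) ⊗ₖ y)).trace = (traceLeft ρ * y).trace := by
  simp only [trace, diag, mul_apply, traceLeft, of_apply, kronecker_apply, one_apply,
    Fintype.sum_prod_type_right, ite_mul, one_mul, zero_mul, mul_ite, mul_zero,
    Finset.sum_ite_eq', Finset.mem_univ, if_true, Finset.sum_mul]
  exact Finset.sum_congr rfl fun _ _ => Finset.sum_comm

theorem trace_mul_conjTranspose_kronecker_one_mul [DecidableEq b] (ρ : Matrix (a × b) (a × b) ℂ)
    (x : Matrix a a ℂ) :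
    (ρ * (x ⊗ₖ (1 : Matrix b b ℂ))ᴴ * (x ⊗ₖ 1)).trace = (traceRight ρ * xᴴ * x).trace := by
  rw [conjTranspose_kronecker, conjTranspose_one, mul_assoc, ← mul_kronecker_mul, one_mul,
    trace_mul_kronecker_one, mul_assoc]

theorem trace_mul_conjTranspose_one_kronecker_mul [DecidableEq a] (ρ : Matrix (a × b) (a × b) ℂ)
    (y : Matrix b b ℂ) :
    (ρ * ((1 : Matrix a a ℂ) ⊗ₖ y)ᴴ * (1 ⊗ₖ y)).trace = (traceLeft ρ * yᴴ * y).trace := by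
  rw [conjTranspose_kronecker, conjTranspose_one, mul_assoc, ← mul_kronecker_mul, one_mul,
    trace_mul_one_kronecker, mul_assoc]

end PartialTrace

/-- If `(a ⊗ 1 - 1 ⊗ b)·s_AB = 0` then the expectation values agree and
the covariance saturates both variances. -/
theorem kernel_saturates_covariance
    {a b : Type*} [Fintype a] [DecidableEq a] [Fintype b] [DecidableEq b]
    (ρAB : Matrix (a × b) (a × b) ℂ) (hρ : IsDensity ρAB)
    (sAB : Matrix (a × b) (a × b) ℂ) (hsAB : IsSuppProj sAB ρAB)
    (x : Matrix a a ℂ) (y : Matrix b b ℂ)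
    (hker : (x ⊗ₖ (1 : Matrix b b ℂ) - (1 : Matrix a a ℂ) ⊗ₖ y) * sAB = 0) :
    let ρA := traceRight ρAB
    let ρB := traceLeft ρAB
    let x' := x - (ρA * x).trace • (1 : Matrix a a ℂ)
    let y' := y - (ρB * y).trace • (1 : Matrix b b ℂ)
    let Cov := (ρAB * (x' ⊗ₖ (1 : Matrix b b ℂ))ᴴ * ((1 : Matrix a a ℂ) ⊗ₖ y')).trace
    (ρA * x).trace = (ρB * y).trace ∧
      Cov = (ρA * x'ᴴ * x').trace ∧ Cov = (ρB * y'ᴴ * y').trace := by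
  intro ρA ρB x' y' Cov
  have hρX : (x ⊗ₖ (1 : Matrix b b ℂ)) * ρAB = ((1 : Matrix a a ℂ) ⊗ₖ y) * ρAB := by
    rw [← sub_eq_zero, ← sub_mul, ← hsAB.2.2.1, ← mul_assoc, hker, zero_mul]
  have hmean : (ρA * x).trace = (ρB * y).trace := by
    rw [← trace_mul_kronecker_one, ← trace_mul_one_kronecker]
    exact trace_mul_eq_of_mul_eq hρX
  have hρX' : (x' ⊗ₖ (1 : Matrix b b ℂ)) * ρAB = ((1 : Matrix a a ℂ) ⊗ₖ y') * ρAB := by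
    simp only [x', y', sub_smul_one_kronecker_one, one_kronecker_sub_smul_one, hmean, sub_mul, hρX]
  refine ⟨hmean, ?_, ?_⟩
  · exact (trace_mul_conjTranspose_mul_eq_left hρX').trans
      (trace_mul_conjTranspose_kronecker_one_mul ρAB x')
  · exact (trace_mul_conjTranspose_mul_eq_right hρ.1.isHermitian hρX').trans
      (trace_mul_conjTranspose_one_kronecker_mul ρAB y')
end

section
/- Let ψ ∈ H_A ⊗ H_B be a unit vector and ρ_AB = |ψ⟩⟨ψ| the associated pure bipartite density state. For any function f : ℝ → ℂ, the pair (f(ρ_A), f(ρ_B)) obtained by applying f via the spectral decompositions of the reduced states ρ_A = Tr_B(ρ_AB), ρ_B = Tr_A(ρ_AB) satisfies (f(ρ_A) ⊗ 1_B − 1_A ⊗ f(ρ_B)) · s_AB = 0, where s_AB is the support projection of ρ_AB (equivalently, (f(ρ_A) ⊗ 1_B) ψ = (1_A ⊗ f(ρ_B)) ψ). -/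
/-!
Write `ψ = vec X` with `X : Matrix b a ℂ`. The reduced states are `ρ_A = (Xᴴ X)ᵀ` and
`ρ_B = X Xᴴ`, and `X` intertwines the two Gram matrices: `(X Xᴴ) X = X (Xᴴ X)`. Lagrange
interpolation of `x ↦ if x = 0 then 0 else f x` on the union of both spectra gives one polynomial
`p` with `f(ρ_A) = p(ρ_A)` and `f(ρ_B) = p(ρ_B)`; the intertwining passes to `p`, and under
`vec` it reads `(f(ρ_A) ⊗ 1) ψ = (1 ⊗ f(ρ_B)) ψ`. Finally, a matrix annihilating `ρ = |ψ⟩⟨ψ|`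
from the right also annihilates its support projection `s`: `s` is Hermitian and
`ker ρ ⊆ ker s`.
-/

open Matrix Kronecker
open ComplexOrder

/-- Apply a function `f : ℝ → ℂ` to a Hermitian matrix through its spectral
decomposition, summing only over the nonzero eigenvalues (so the value `f 0` is
irrelevant). -/
noncomputable def specApply {m : Type*} [Fintype m] [DecidableEq m]
    {A : Matrix m m ℂ} (hA : A.IsHermitian) (f : ℝ → ℂ) : Matrix m m ℂ :=
  (hA.eigenvectorUnitary : Matrix m m ℂ) *
    Matrix.diagonal (fun i => if hA.eigenvalues i = 0 then 0 else f (hA.eigenvalues i)) *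
    star (hA.eigenvectorUnitary : Matrix m m ℂ)

namespace Matrix

variable {R : Type*} [CommSemiring R] {m n : Type*} [Fintype m] [DecidableEq m]
  [Fintype n] [DecidableEq n]

theorem aeval_mul_eq_mul_aeval {X : Matrix m m R} {Y : Matrix m n R} {Z : Matrix n n R}
    (h : X * Y = Y * Z) (p : Polynomial R) :
    Polynomial.aeval X p * Y = Y * Polynomial.aeval Z p := by
  have hpow (k : ℕ) : X ^ k * Y = Y * Z ^ k := by
    induction k with
    | zero => simp
    | succ k ih => rw [pow_succ, pow_succ, Matrix.mul_assoc, h, ← Matrix.mul_assoc, ih,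
        Matrix.mul_assoc]
  induction p using Polynomial.induction_on' with
  | add p q hp hq => simp only [map_add, Matrix.add_mul, Matrix.mul_add, hp, hq]
  | monomial k c =>
    simp only [Polynomial.aeval_monomial, Algebra.algebraMap_eq_smul_one, Matrix.smul_mul,
      Matrix.mul_smul, Matrix.one_mul, hpow]

theorem aeval_transpose (M : Matrix m m R) (p : Polynomial R) :
    Polynomial.aeval Mᵀ p = (Polynomial.aeval M p)ᵀ := by
  have h := Polynomial.aeval_algHom_apply (transposeAlgEquiv m R R) M p
  rwa [transposeAlgEquiv_apply, Polynomial.aeval_op_apply, transposeAlgEquiv_apply,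
    MulOpposite.op_inj] at h

theorem aeval_diagonal (d : m → R) (p : Polynomial R) :
    Polynomial.aeval (diagonal d) p = diagonal fun i => p.eval (d i) := by
  rw [← diagonalAlgHom_apply R, Polynomial.aeval_algHom_apply, Polynomial.aeval_pi_apply]
  simp

end Matrix

theorem specApply_eq_aeval {m : Type*} [Fintype m] [DecidableEq m] {A : Matrix m m ℂ}
    (hA : A.IsHermitian) (f : ℝ → ℂ) (p : Polynomial ℂ)
    (hp : ∀ i, p.eval (hA.eigenvalues i : ℂ) = if hA.eigenvalues i = 0 then 0
      else f (hA.eigenvalues i)) :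
    specApply hA f = Polynomial.aeval A p := by
  conv_rhs => rw [hA.spectral_theorem]
  rw [Polynomial.aeval_algHom_apply, Matrix.aeval_diagonal]
  simp [specApply, hp]

theorem exists_specApply_eq_aeval_and_specApply_eq_aeval {m n : Type*} [Fintype m]
    [DecidableEq m] [Fintype n] [DecidableEq n] {A : Matrix m m ℂ} {B : Matrix n n ℂ}
    (hA : A.IsHermitian) (hB : B.IsHermitian) (f : ℝ → ℂ) :
    ∃ p : Polynomial ℂ, specApply hA f = Polynomial.aeval A p ∧
      specApply hB f = Polynomial.aeval B p := by
  classical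
  set S : Finset ℝ := Finset.univ.image hA.eigenvalues ∪ Finset.univ.image hB.eigenvalues
  set p := Lagrange.interpolate S (↑) fun x : ℝ => if x = 0 then 0 else f x
  have hp {x : ℝ} (hx : x ∈ S) : p.eval (x : ℂ) = if x = 0 then 0 else f x :=
    Lagrange.eval_interpolate_at_node _ Complex.ofReal_injective.injOn hx
  exact ⟨p, specApply_eq_aeval hA f p fun i => hp (by simp [S]),
    specApply_eq_aeval hB f p fun i => hp (by simp [S])⟩

theorem IsSuppProj.mul_eq_zero_of_mul_eq_zero {m n : Type*} [Fintype m] [Fintype n]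
    {s ρ : Matrix n n ℂ} (hs : IsSuppProj s ρ) (hρ : ρ.IsHermitian) {M : Matrix m n ℂ}
    (hM : M * ρ = 0) : M * s = 0 := by
  obtain ⟨hs_herm, -, -, hker⟩ := hs
  have hρM : ρ * Mᴴ = 0 := by
    rw [← hρ.eq, ← conjTranspose_mul, hM, conjTranspose_zero]
  have hsM : s * Mᴴ = 0 := by
    refine ext_iff_mulVec.mpr fun v => ?_
    rw [← mulVec_mulVec, zero_mulVec]
    exact hker _ (by rw [mulVec_mulVec, hρM, zero_mulVec])
  rw [← hs_herm.eq, ← conjTranspose_conjTranspose M, ← conjTranspose_mul, hsM,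
    conjTranspose_zero]

theorem traceRight_vecMulVec_vec {a b : Type*} [Fintype b] (X : Matrix b a ℂ) :
    traceRight (vecMulVec (vec X) (star (vec X))) = (Xᴴ * X)ᵀ := by
  ext i j
  simp [traceRight, vecMulVec_apply, mul_apply, mul_comm]

theorem traceLeft_vecMulVec_vec {a b : Type*} [Fintype a] (X : Matrix b a ℂ) :
    traceLeft (vecMulVec (vec X) (star (vec X))) = X * Xᴴ := by
  ext i j
  simp [traceLeft, vecMulVec_apply, mul_apply]

theorem kronecker_one_mulVec_vec_eq_one_kronecker_mulVec_vec {R : Type*} [CommSemiring R]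
    {a b : Type*} [Fintype a] [DecidableEq a] [Fintype b] [DecidableEq b]
    {X : Matrix b a R} {F : Matrix a a R} {G : Matrix b b R} (h : X * Fᵀ = G * X) :
    (F ⊗ₖ (1 : Matrix b b R)) *ᵥ vec X = ((1 : Matrix a a R) ⊗ₖ G) *ᵥ vec X := by
  rw [kronecker_mulVec_vec, kronecker_mulVec_vec, Matrix.one_mul, transpose_one, Matrix.mul_one, h]

theorem specApply_pair_cocycle_general
    {a b : Type*} [Fintype a] [DecidableEq a] [Fintype b] [DecidableEq b]
    (ψ : a × b → ℂ)
    (ρAB : Matrix (a × b) (a × b) ℂ) (hρdef : ρAB = vecMulVec ψ (star ψ))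
    (hA : (traceRight ρAB).IsHermitian) (hB : (traceLeft ρAB).IsHermitian)
    (sAB : Matrix (a × b) (a × b) ℂ) (hsAB : IsSuppProj sAB ρAB)
    (f : ℝ → ℂ) :
    (specApply hA f ⊗ₖ (1 : Matrix b b ℂ) - (1 : Matrix a a ℂ) ⊗ₖ specApply hB f) * sAB
      = 0 := by
  subst hρdef
  obtain ⟨X, rfl⟩ := vec_bijective.surjective ψ
  obtain ⟨p, hpA, hpB⟩ := exists_specApply_eq_aeval_and_specApply_eq_aeval hA hB f
  have hX : X * (Polynomial.aeval (Xᴴ * X)ᵀ p)ᵀ = Polynomial.aeval (X * Xᴴ) p * X := by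
    rw [aeval_transpose, transpose_transpose]
    exact (aeval_mul_eq_mul_aeval (Matrix.mul_assoc X Xᴴ X) p).symm
  refine hsAB.mul_eq_zero_of_mul_eq_zero (posSemidef_vecMulVec_self_star _).isHermitian ?_
  rw [mul_vecMulVec, sub_mulVec, hpA, hpB, traceRight_vecMulVec_vec, traceLeft_vecMulVec_vec,
    kronecker_one_mulVec_vec_eq_one_kronecker_mulVec_vec hX, sub_self, zero_vecMulVec]

/-- For a pure bipartite state `ρAB = |ψ⟩⟨ψ|` and any `f : ℝ → ℂ`, the
pair `(f(ρA), f(ρB))` satisfies `(f(ρA) ⊗ 1 - 1 ⊗ f(ρB))·s_AB = 0`. -/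
theorem specApply_pair_cocycle
    {a b : Type*} [Fintype a] [DecidableEq a] [Fintype b] [DecidableEq b]
    (ψ : a × b → ℂ) (hψ : star ψ ⬝ᵥ ψ = 1)
    (ρAB : Matrix (a × b) (a × b) ℂ) (hρdef : ρAB = vecMulVec ψ (star ψ))
    (hA : (traceRight ρAB).IsHermitian) (hB : (traceLeft ρAB).IsHermitian)
    (sAB : Matrix (a × b) (a × b) ℂ) (hsAB : IsSuppProj sAB ρAB)
    (f : ℝ → ℂ) :
    (specApply hA f ⊗ₖ (1 : Matrix b b ℂ) - (1 : Matrix a a ℂ) ⊗ₖ specApply hB f) * sAB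
      = 0 :=
  specApply_pair_cocycle_general ψ ρAB hρdef hA hB sAB hsAB f
end

section
/- Let ρ_AB be a bipartite density state on H_A ⊗ H_B whose support projection equals s_A ⊗ s_B (support factorizable). If (a,b) ∈ (End(H_A)·s_A) × (End(H_B)·s_B) satisfies (a ⊗ 1_B − 1_A ⊗ b)·(s_A ⊗ s_B) = 0, then a = λ s_A and b = λ s_B for some λ ∈ ℂ. Consequently the zeroth GNS cohomology H⁰ = ker(d⁰)/span{(s_A, s_B)} vanishes. -/
/-!
Since `x = r * s_A` and `s_A` is idempotent, `x * s_A = x`, and likewise `y * s_B = y`; so the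
kernel condition says `x ⊗ s_B = s_A ⊗ y`. Both support projections are nonzero because the
reduced states have trace one, and an equality of Kronecker products with nonzero factors
`s_A`, `s_B` forces `x` and `y` to be the same multiple of `s_A` and `s_B`.
-/

open Matrix Kronecker
open ComplexOrder

namespace Matrix

theorem exists_smul_of_kronecker_eq_kronecker {K l m n p : Type*} [Field K]
    {x s : Matrix l m K} {t y : Matrix n p K} (hs : s ≠ 0) (ht : t ≠ 0)
    (h : x ⊗ₖ t = s ⊗ₖ y) : ∃ c : K, x = c • s ∧ y = c • t := by
  obtain ⟨i₀, j₀, hs₀⟩ : ∃ i j, s i j ≠ 0 := by simpa [← Matrix.ext_iff] using hs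
  obtain ⟨k₀, l₀, ht₀⟩ : ∃ k l, t k l ≠ 0 := by simpa [← Matrix.ext_iff] using ht
  have entry : ∀ i j k l, x i j * t k l = s i j * y k l := fun i j k l => by
    simpa only [kronecker_apply] using congr_fun₂ h (i, k) (j, l)
  have hx : x = (y k₀ l₀ / t k₀ l₀) • s := by
    ext i j
    rw [smul_apply, smul_eq_mul, div_mul_eq_mul_div, eq_div_iff ht₀, entry, mul_comm]
  refine ⟨_, hx, ?_⟩
  ext k l
  refine mul_left_cancel₀ hs₀ ?_
  rw [smul_apply, smul_eq_mul, ← entry, hx, smul_apply, smul_eq_mul]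
  ring

theorem kronecker_one_sub_one_kronecker_mul {R l m : Type*} [CommRing R]
    [Fintype l] [DecidableEq l] [Fintype m] [DecidableEq m]
    (x s : Matrix l l R) (y t : Matrix m m R) :
    (x ⊗ₖ (1 : Matrix m m R) - (1 : Matrix l l R) ⊗ₖ y) * (s ⊗ₖ t) = (x * s) ⊗ₖ t - s ⊗ₖ (y * t) := by
  rw [sub_mul, ← mul_kronecker_mul, ← mul_kronecker_mul, Matrix.one_mul, Matrix.one_mul]

end Matrix

theorem trace_traceRight {a b : Type*} [Fintype a] [Fintype b] (M : Matrix (a × b) (a × b) ℂ) :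
    (traceRight M).trace = M.trace := by
  simp [Matrix.trace, traceRight, Fintype.sum_prod_type]

theorem trace_traceLeft {a b : Type*} [Fintype a] [Fintype b] (M : Matrix (a × b) (a × b) ℂ) :
    (traceLeft M).trace = M.trace := by
  simp [Matrix.trace, traceLeft, Fintype.sum_prod_type, Finset.sum_comm (γ := a)]

theorem IsSuppProj.ne_zero {n : Type*} [Fintype n] {s ρ : Matrix n n ℂ} (hs : IsSuppProj s ρ)
    (hρ : ρ.trace ≠ 0) : s ≠ 0 := by
  rintro rfl
  exact hρ (by rw [← hs.2.2.1, Matrix.zero_mul, trace_zero])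

theorem IsSuppProj.mul_eq_self_of_eq_mul {n : Type*} [Fintype n] {s ρ x r : Matrix n n ℂ}
    (hs : IsSuppProj s ρ) (hx : x = r * s) : x * s = x := by
  rw [hx, Matrix.mul_assoc, hs.2.1]

theorem suppFact_kernel_is_trivial_general
    {a b : Type*} [Fintype a] [DecidableEq a] [Fintype b] [DecidableEq b]
    (ρAB : Matrix (a × b) (a × b) ℂ) (hρ : IsDensity ρAB)
    (sA : Matrix a a ℂ) (sB : Matrix b b ℂ)
    (hsA : IsSuppProj sA (traceRight ρAB))
    (hsB : IsSuppProj sB (traceLeft ρAB))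
    (x : Matrix a a ℂ) (y : Matrix b b ℂ)
    (hx : ∃ r, x = r * sA) (hy : ∃ r, y = r * sB)
    (hker : (x ⊗ₖ (1 : Matrix b b ℂ) - (1 : Matrix a a ℂ) ⊗ₖ y) * (sA ⊗ₖ sB) = 0) :
    ∃ c : ℂ, x = c • sA ∧ y = c • sB := by
  obtain ⟨rx, hrx⟩ := hx
  obtain ⟨ry, hry⟩ := hy
  have htr : ρAB.trace ≠ 0 := hρ.2 ▸ one_ne_zero
  have hsA0 := hsA.ne_zero (by rwa [trace_traceRight])
  have hsB0 := hsB.ne_zero (by rwa [trace_traceLeft])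
  rw [kronecker_one_sub_one_kronecker_mul, hsA.mul_eq_self_of_eq_mul hrx,
    hsB.mul_eq_self_of_eq_mul hry, sub_eq_zero] at hker
  exact exists_smul_of_kronecker_eq_kronecker hsA0 hsB0 hker

/-- For a support factorizable bipartite density state
(`s_AB = s_A ⊗ s_B`), any pair `(a,b) ∈ (End·s_A) × (End·s_B)` with
`(a ⊗ 1 - 1 ⊗ b)(s_A ⊗ s_B) = 0` is a scalar multiple of `(s_A, s_B)`;
hence the zeroth GNS cohomology vanishes. -/
theorem suppFact_kernel_is_trivial
    {a b : Type*} [Fintype a] [DecidableEq a] [Fintype b] [DecidableEq b]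
    (ρAB : Matrix (a × b) (a × b) ℂ) (hρ : IsDensity ρAB)
    (sA : Matrix a a ℂ) (sB : Matrix b b ℂ) (sAB : Matrix (a × b) (a × b) ℂ)
    (hsA : IsSuppProj sA (traceRight ρAB))
    (hsB : IsSuppProj sB (traceLeft ρAB))
    (hsAB : IsSuppProj sAB ρAB)
    (hfact : sAB = sA ⊗ₖ sB)
    (x : Matrix a a ℂ) (y : Matrix b b ℂ)
    (hx : ∃ r, x = r * sA) (hy : ∃ r, y = r * sB)
    (hker : (x ⊗ₖ (1 : Matrix b b ℂ) - (1 : Matrix a a ℂ) ⊗ₖ y) * (sA ⊗ₖ sB) = 0) :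
    ∃ c : ℂ, x = c • sA ∧ y = c • sB :=
  suppFact_kernel_is_trivial_general ρAB hρ sA sB hsA hsB x y hx hy hker
end

section
/- Vanishing of multipartite mutual information for factorizable states: Let P be a finite index set partitioned as P = Q ⊔ R with Q, R nonempty, and suppose ρ_P = ρ_Q ⊗ ρ_R is a tensor product density state on ⊗_{p∈P} H_p. Then the multipartite mutual information I(ρ_P) := Σ_{T ⊆ P} (−1)^{|T|−1} S(ρ_T) vanishes, where ρ_T is the reduced density state on ⊗_{t∈T} H_t and S is the von Neumann entropy. -/
open Matrix
open ComplexOrder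

/-- Glue a configuration on the subsystem `T` together with a configuration on its
complement into a configuration of the total system. -/
noncomputable def glueConfig {ι : Type*} [Fintype ι] [DecidableEq ι] {n : ι → Type*}
    (T : Finset ι) (x : ∀ t : {i // i ∈ T}, n t.1) (y : ∀ t : {i // i ∈ Tᶜ}, n t.1) :
    ∀ i, n i :=
  fun i => if h : i ∈ T then x ⟨i, h⟩ else y ⟨i, Finset.mem_compl.mpr h⟩

/-- The reduced density state on the subsystem `T ⊆ ι`, obtained by the partial trace
over the complementary tensor factors. -/
noncomputable def reduceState {ι : Type*} [Fintype ι] [DecidableEq ι]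
    {n : ι → Type*} [∀ i, Fintype (n i)] [∀ i, DecidableEq (n i)]
    (ρ : Matrix (∀ i, n i) (∀ i, n i) ℂ) (T : Finset ι) :
    Matrix (∀ t : {i // i ∈ T}, n t.1) (∀ t : {i // i ∈ T}, n t.1) ℂ :=
  Matrix.of fun x y => ∑ z : ∀ t : {i // i ∈ Tᶜ}, n t.1,
    ρ (glueConfig T x z) (glueConfig T y z)

open scoped Classical in
/-- The von Neumann entropy `-Tr(ρ log ρ)` of a (Hermitian) matrix, computed from its
eigenvalues, with the convention `0 log 0 = 0` (and junk value `0` on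
non-Hermitian input). -/
noncomputable def vnEntropy {m : Type*} [Fintype m] [DecidableEq m]
    (ρ : Matrix m m ℂ) : ℝ :=
  if h : ρ.IsHermitian then -∑ i, h.eigenvalues i * Real.log (h.eigenvalues i) else 0

/-!
Since `ρ` factorizes, every reduced state `ρ_T` is, up to relabelling the basis configurations of
`T`, the Kronecker product of the reduced states of `ρ_Q` on `T ∩ Q` and of `ρ_R` on `T ∩ R`.
The entropy is additive on Kronecker products of unit-trace Hermitian matrices (`negMulLog` of a
product of eigenvalues splits), so `S(ρ_T) = f T + g T`, where `f` does not see the sites in `R`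
and `g` does not see those in `Q`. An alternating sum `∑_T (-1)^|T| f T` vanishes as soon as `f`
is blind to a single site `r`, because `T ↦ insert r T` pairs off the terms with opposite signs.
-/

open Polynomial Real
open scoped Kronecker

namespace Finset

theorem sum_powerset_neg_one_pow_card_mul_eq_zero {ι R : Type*} [DecidableEq ι] [Ring R]
    {s : Finset ι} {q : ι} (hq : q ∈ s) {f : Finset ι → R} (hf : ∀ T, f (insert q T) = f T) :
    ∑ T ∈ s.powerset, (-1) ^ T.card * f T = 0 := by
  rw [← insert_erase hq, sum_powerset_insert (notMem_erase q s), ← sum_add_distrib]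
  refine sum_eq_zero fun T hT => ?_
  have hqT : q ∉ T := fun h => notMem_erase q s (mem_powerset.mp hT h)
  rw [card_insert_of_notMem hqT, hf, pow_succ]
  noncomm_ring

theorem subtype_insert_of_neg {α : Type*} [DecidableEq α] (p : α → Prop) [DecidablePred p]
    {a : α} (ha : ¬ p a) (T : Finset α) : (insert a T).subtype p = T.subtype p := by
  ext x
  simp only [mem_subtype, mem_insert, or_iff_right_iff_imp]
  rintro rfl
  exact absurd x.2 ha

end Finset

namespace Matrix

theorem IsHermitian.kronecker {R m m' : Type*} [CommMagma R] [StarMul R] {A : Matrix m m R}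
    {B : Matrix m' m' R} (hA : A.IsHermitian) (hB : B.IsHermitian) : (A ⊗ₖ B).IsHermitian := by
  rw [IsHermitian, conjTranspose_kronecker, hA.eq, hB.eq]

variable {m m' : Type*} [Fintype m] [DecidableEq m] [Fintype m'] [DecidableEq m']

theorem IsHermitian.roots_charpoly_kronecker {A : Matrix m m ℂ} {B : Matrix m' m' ℂ}
    (hA : A.IsHermitian) (hB : B.IsHermitian) :
    (A ⊗ₖ B).charpoly.roots =
      Finset.univ.val.map fun p : m × m' => (hA.eigenvalues p.1 : ℂ) * hB.eigenvalues p.2 := by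
  set U : Matrix m m ℂ := (hA.eigenvectorUnitary : Matrix m m ℂ)
  set V : Matrix m' m' ℂ := (hB.eigenvectorUnitary : Matrix m' m' ℂ)
  have hUV : (star U ⊗ₖ star V) * (U ⊗ₖ V) = 1 := by
    rw [← mul_kronecker_mul, Unitary.star_mul_self_of_mem hA.eigenvectorUnitary.2,
      Unitary.star_mul_self_of_mem hB.eigenvectorUnitary.2, one_kronecker_one]
  conv_lhs => rw [hA.spectral_theorem, hB.spectral_theorem, Unitary.conjStarAlgAut_apply,
    Unitary.conjStarAlgAut_apply, mul_kronecker_mul, mul_kronecker_mul, mul_assoc,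
    charpoly_mul_comm, mul_assoc, hUV, mul_one, diagonal_kronecker_diagonal, charpoly_diagonal]
  rw [roots_prod _ _ (Finset.prod_ne_zero_iff.mpr fun p _ => X_sub_C_ne_zero _)]
  simp only [roots_X_sub_C, Multiset.bind_singleton]
  rfl

theorem IsHermitian.sum_eigenvalues_eq_one {A : Matrix m m ℂ} (hA : A.IsHermitian)
    (hA₁ : A.trace = 1) : ∑ i, hA.eigenvalues i = 1 := by
  have h := hA.trace_eq_sum_eigenvalues
  rw [hA₁] at h
  apply Complex.ofReal_injective
  push_cast
  exact h.symm

end Matrix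

section Entropy

variable {m m' : Type*} [Fintype m] [DecidableEq m] [Fintype m'] [DecidableEq m']

theorem vnEntropy_eq_sum_negMulLog {A : Matrix m m ℂ} (hA : A.IsHermitian) :
    vnEntropy A = ∑ i, negMulLog (hA.eigenvalues i) := by
  simp only [vnEntropy, dif_pos hA, negMulLog, neg_mul, Finset.sum_neg_distrib]

theorem vnEntropy_eq_sum_roots_charpoly {A : Matrix m m ℂ} (hA : A.IsHermitian) :
    vnEntropy A = (A.charpoly.roots.map fun z => negMulLog z.re).sum := by
  rw [hA.roots_charpoly_eq_eigenvalues, Multiset.map_map, Finset.sum_map_val,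
    vnEntropy_eq_sum_negMulLog hA]
  rfl

theorem vnEntropy_submatrix_equiv {A : Matrix m m ℂ} (hA : A.IsHermitian) (e : m' ≃ m) :
    vnEntropy (A.submatrix e e) = vnEntropy A := by
  rw [vnEntropy_eq_sum_roots_charpoly (hA.submatrix e), vnEntropy_eq_sum_roots_charpoly hA,
    ← e.symm_symm, ← reindex_apply, charpoly_reindex]

theorem vnEntropy_kronecker {A : Matrix m m ℂ} {B : Matrix m' m' ℂ}
    (hA : A.IsHermitian) (hB : B.IsHermitian) (hA₁ : A.trace = 1) (hB₁ : B.trace = 1) :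
    vnEntropy (A ⊗ₖ B) = vnEntropy A + vnEntropy B := by
  rw [vnEntropy_eq_sum_roots_charpoly (hA.kronecker hB), hA.roots_charpoly_kronecker hB,
    vnEntropy_eq_sum_negMulLog hA, vnEntropy_eq_sum_negMulLog hB]
  simp only [Multiset.map_map, Function.comp_apply, ← Complex.ofReal_mul, Complex.ofReal_re,
    Finset.sum_map_val, Fintype.sum_prod_type, negMulLog_mul, Finset.sum_add_distrib,
    ← Finset.mul_sum, ← Finset.sum_mul, hA.sum_eigenvalues_eq_one hA₁, hB.sum_eigenvalues_eq_one hB₁, one_mul]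

end Entropy

section PartialTrace

variable {ι : Type*} [Fintype ι] [DecidableEq ι] {n : ι → Type*}

noncomputable def glueConfigEquiv (T : Finset ι) :
    (∀ t : {i // i ∈ T}, n t.1) × (∀ t : {i // i ∈ Tᶜ}, n t.1) ≃ ∀ i, n i where
  toFun p := glueConfig T p.1 p.2
  invFun c := (fun t => c t.1, fun t => c t.1)
  left_inv p := by
    ext t
    · simp [glueConfig, t.2]
    · simp [glueConfig, Finset.mem_compl.mp t.2]
  right_inv c := by
    funext i
    by_cases h : i ∈ T <;> simp [glueConfig, h]

theorem glueConfig_comp_val (A T : Finset ι) (x : ∀ t : {i // i ∈ T}, n t.1)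
    (z : ∀ t : {i // i ∈ Tᶜ}, n t.1) :
    (fun a : {i // i ∈ A} => glueConfig T x z a.1) =
      glueConfig (T.subtype (· ∈ A)) (fun s => x ⟨s.1.1, Finset.mem_subtype.mp s.2⟩)
        (fun s => z ⟨s.1.1,
          Finset.mem_compl.mpr fun h => Finset.mem_compl.mp s.2 (Finset.mem_subtype.mpr h)⟩) := by
  funext a
  by_cases h : a.1 ∈ T <;> simp [glueConfig, h]

noncomputable def splitConfig (Q S : Finset ι) {A : Finset {i // i ∈ Q}}
    {B : Finset {i // i ∈ Qᶜ}} (hA : ∀ a, a ∈ A ↔ a.1 ∈ S) (hB : ∀ b, b ∈ B ↔ b.1 ∈ S) :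
    (∀ s : {i // i ∈ S}, n s.1) ≃
      (∀ a : {x // x ∈ A}, n a.1.1) × (∀ b : {x // x ∈ B}, n b.1.1) where
  toFun x := (fun a => x ⟨a.1.1, (hA _).mp a.2⟩, fun b => x ⟨b.1.1, (hB _).mp b.2⟩)
  invFun p s := if h : s.1 ∈ Q then p.1 ⟨⟨s.1, h⟩, (hA _).mpr s.2⟩
    else p.2 ⟨⟨s.1, Finset.mem_compl.mpr h⟩, (hB _).mpr s.2⟩
  left_inv x := by
    funext s
    by_cases h : s.1 ∈ Q <;> simp [h]
  right_inv p := by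
    ext a
    · simp [a.1.2]
    · simp [Finset.mem_compl.mp a.1.2]

variable [∀ i, Fintype (n i)] [∀ i, DecidableEq (n i)]

theorem reduceState_isHermitian {ρ : Matrix (∀ i, n i) (∀ i, n i) ℂ} (hρ : ρ.IsHermitian)
    (T : Finset ι) : (reduceState ρ T).IsHermitian := by
  ext x y
  simp only [conjTranspose_apply, reduceState, of_apply, star_sum]
  exact Finset.sum_congr rfl fun z _ => by rw [← conjTranspose_apply, hρ.eq]

theorem trace_reduceState (ρ : Matrix (∀ i, n i) (∀ i, n i) ℂ) (T : Finset ι) :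
    (reduceState ρ T).trace = ρ.trace := by
  simp only [trace, diag_apply, reduceState, of_apply]
  rw [← Fintype.sum_prod_type']
  exact Fintype.sum_equiv (glueConfigEquiv T) _ _ fun _ => rfl

theorem reduceState_eq_submatrix_kronecker (Q : Finset ι) {ρ : Matrix (∀ i, n i) (∀ i, n i) ℂ}
    {ρQ : Matrix (∀ t : {i // i ∈ Q}, n t.1) (∀ t : {i // i ∈ Q}, n t.1) ℂ}
    {ρR : Matrix (∀ t : {i // i ∈ Qᶜ}, n t.1) (∀ t : {i // i ∈ Qᶜ}, n t.1) ℂ}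
    (hfact : ∀ x y : ∀ i, n i,
      ρ x y = ρQ (fun t => x t.1) (fun t => y t.1) * ρR (fun t => x t.1) (fun t => y t.1))
    (T : Finset ι) :
    reduceState ρ T = (reduceState ρQ (T.subtype (· ∈ Q)) ⊗ₖ
      reduceState ρR (T.subtype (· ∈ Qᶜ))).submatrix
        (splitConfig Q T (fun _ => Finset.mem_subtype) (fun _ => Finset.mem_subtype))
        (splitConfig Q T (fun _ => Finset.mem_subtype) (fun _ => Finset.mem_subtype)) := by
  ext x y
  simp only [submatrix_apply, kroneckerMap_apply, reduceState, of_apply, Finset.sum_mul_sum]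
  rw [← Fintype.sum_prod_type']
  refine Fintype.sum_equiv (splitConfig Q Tᶜ (by simp) (by simp)) _ _ fun z => ?_
  simp only [hfact, glueConfig_comp_val]
  rfl

theorem vnEntropy_reduceState_of_factorization (Q : Finset ι)
    {ρ : Matrix (∀ i, n i) (∀ i, n i) ℂ}
    {ρQ : Matrix (∀ t : {i // i ∈ Q}, n t.1) (∀ t : {i // i ∈ Q}, n t.1) ℂ}
    {ρR : Matrix (∀ t : {i // i ∈ Qᶜ}, n t.1) (∀ t : {i // i ∈ Qᶜ}, n t.1) ℂ}
    (hρQ : ρQ.IsHermitian) (hρQ₁ : ρQ.trace = 1) (hρR : ρR.IsHermitian) (hρR₁ : ρR.trace = 1)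
    (hfact : ∀ x y : ∀ i, n i,
      ρ x y = ρQ (fun t => x t.1) (fun t => y t.1) * ρR (fun t => x t.1) (fun t => y t.1))
    (T : Finset ι) :
    vnEntropy (reduceState ρ T) = vnEntropy (reduceState ρQ (T.subtype (· ∈ Q))) +
      vnEntropy (reduceState ρR (T.subtype (· ∈ Qᶜ))) := by
  have hQT := reduceState_isHermitian hρQ (T.subtype (· ∈ Q))
  have hRT := reduceState_isHermitian hρR (T.subtype (· ∈ Qᶜ))
  rw [reduceState_eq_submatrix_kronecker Q hfact, vnEntropy_submatrix_equiv (hQT.kronecker hRT),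
    vnEntropy_kronecker hQT hRT (by rw [trace_reduceState, hρQ₁])
      (by rw [trace_reduceState, hρR₁])]

end PartialTrace

theorem mutual_info_eq_zero_of_factorizable_general
    {ι : Type*} [Fintype ι] [DecidableEq ι]
    {n : ι → Type*} [∀ i, Fintype (n i)] [∀ i, DecidableEq (n i)]
    (Q : Finset ι) (hQ : Q.Nonempty) (hR : (Qᶜ : Finset ι).Nonempty)
    (ρ : Matrix (∀ i, n i) (∀ i, n i) ℂ)
    (ρQ : Matrix (∀ t : {i // i ∈ Q}, n t.1) (∀ t : {i // i ∈ Q}, n t.1) ℂ)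
    (ρR : Matrix (∀ t : {i // i ∈ Qᶜ}, n t.1) (∀ t : {i // i ∈ Qᶜ}, n t.1) ℂ)
    (hρQ : IsDensity ρQ) (hρR : IsDensity ρR)
    (hfact : ∀ x y : ∀ i, n i,
      ρ x y = ρQ (fun t => x t.1) (fun t => y t.1) * ρR (fun t => x t.1) (fun t => y t.1)) :
    ∑ T : Finset ι, (-(-1 : ℝ) ^ T.card) * vnEntropy (reduceState ρ T) = 0 := by
  obtain ⟨q, hq⟩ := hQ
  obtain ⟨r, hr⟩ := hR
  simp only [vnEntropy_reduceState_of_factorization Q hρQ.1.isHermitian hρQ.2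
    hρR.1.isHermitian hρR.2 hfact, neg_mul, mul_add, Finset.sum_add_distrib,
    Finset.sum_neg_distrib, ← Finset.powerset_univ]
  rw [Finset.sum_powerset_neg_one_pow_card_mul_eq_zero (Finset.mem_univ r)
      fun T => by rw [Finset.subtype_insert_of_neg (· ∈ Q) (Finset.mem_compl.mp hr)],
    Finset.sum_powerset_neg_one_pow_card_mul_eq_zero (Finset.mem_univ q)
      fun T => by rw [Finset.subtype_insert_of_neg (· ∈ Qᶜ) (Finset.notMem_compl.mpr hq)]]
  simp

/-- If a multipartite density state over `P = Q ⊔ R` (with `Q`, `R`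
nonempty) factorizes as `ρ_P = ρ_Q ⊗ ρ_R`, then the multipartite mutual information
`I(ρ_P) = Σ_{T ⊆ P} (-1)^{|T|-1} S(ρ_T)` vanishes. -/
theorem mutual_info_eq_zero_of_factorizable
    {ι : Type*} [Fintype ι] [DecidableEq ι]
    {n : ι → Type*} [∀ i, Fintype (n i)] [∀ i, DecidableEq (n i)]
    (Q : Finset ι) (hQ : Q.Nonempty) (hR : (Qᶜ : Finset ι).Nonempty)
    (ρ : Matrix (∀ i, n i) (∀ i, n i) ℂ)
    (ρQ : Matrix (∀ t : {i // i ∈ Q}, n t.1) (∀ t : {i // i ∈ Q}, n t.1) ℂ)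
    (ρR : Matrix (∀ t : {i // i ∈ Qᶜ}, n t.1) (∀ t : {i // i ∈ Qᶜ}, n t.1) ℂ)
    (hρ : IsDensity ρ) (hρQ : IsDensity ρQ) (hρR : IsDensity ρR)
    (hfact : ∀ x y : ∀ i, n i,
      ρ x y = ρQ (fun t => x t.1) (fun t => y t.1) * ρR (fun t => x t.1) (fun t => y t.1)) :
    ∑ T : Finset ι, (-(-1 : ℝ) ^ T.card) * vnEntropy (reduceState ρ T) = 0 :=
  mutual_info_eq_zero_of_factorizable_general Q hQ hR ρ ρQ ρR hρQ hρR hfact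
end

section
/- Multiplicativity of the state index: Let P = Q ⊔ R be a disjoint union of finite index sets with ρ_P = ρ_Q ⊗ ρ_R a tensor product density state. Fix complex parameters α, q, r and set D(T) = (dim H_T)^α · (Tr(ρ_T^q))^r for T ⊆ P (with D(∅) = 1). Define X(ρ_P) = Σ_{T⊆P} (−1)^{|T|} D(T). Then X(ρ_P) = X(ρ_Q)·X(ρ_R), where X(ρ_Q), X(ρ_R) are defined analogously using the reduced states of ρ_Q and ρ_R. -/
open Matrix
open ComplexOrder

/-- `Tr(ρ^q)` for a natural power `q`, with the convention that `ρ^0` is the support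
projection of `ρ` (so that `Tr(ρ^0) = rank ρ`). -/
noncomputable def trPow {m : Type*} [Fintype m] [DecidableEq m]
    (ρ : Matrix m m ℂ) (q : ℕ) : ℂ :=
  if q = 0 then (ρ.rank : ℂ) else (ρ ^ q).trace

/-- The state index `X(ρ) = Σ_{T ⊆ P} (-1)^{|T|} (dim H_T)^α (Tr ρ_T^q)^r` (at `w = 1`). -/
noncomputable def stateIndex {ι : Type*} [Fintype ι] [DecidableEq ι]
    {n : ι → Type*} [∀ i, Fintype (n i)] [∀ i, DecidableEq (n i)]
    (ρ : Matrix (∀ i, n i) (∀ i, n i) ℂ) (α : ℂ) (q r : ℕ) : ℂ :=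
  ∑ T : Finset ι, (-1 : ℂ) ^ T.card *
    ((Fintype.card (∀ t : {i // i ∈ T}, n t.1) : ℂ) ^ α * (trPow (reduceState ρ T) q) ^ r)

/-!
For a product state every subsystem `T` splits as `(T ∩ Q) ⊔ (T ∩ Qᶜ)`: the dimension of
`H_T` multiplies, `(-1)^{|T|}` multiplies, and the partial trace of `ρ_Q ⊗ ρ_R` over `Tᶜ` is
`ρ_{T ∩ Q} ⊗ ρ_{T ∩ Qᶜ}` up to reordering the tensor factors, so `Tr(ρ_T^q)` (and, for `q = 0`,
the rank) multiplies as well. Thus each summand of `X(ρ_P)` is the product of the summands for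
`T ∩ Q` and `T ∩ Qᶜ`, and since `T ↦ (T ∩ Q, T ∩ Qᶜ)` is a bijection the sum factors.
-/

open Kronecker TensorProduct

theorem LinearMap.finrank_range_map_tensorProduct {K M N M' N' : Type*} [Field K]
    [AddCommGroup M] [Module K M] [AddCommGroup N] [Module K N]
    [AddCommGroup M'] [Module K M'] [AddCommGroup N'] [Module K N']
    (f : M →ₗ[K] M') (g : N →ₗ[K] N') :
    Module.finrank K (range (TensorProduct.map f g)) =
      Module.finrank K (range f) * Module.finrank K (range g) := by
  have hfactor : TensorProduct.map f g =
      (mapIncl (range f) (range g)).comp (TensorProduct.map f.rangeRestrict g.rangeRestrict) := by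
    rw [mapIncl, ← map_comp]
    rfl
  have hinj : Function.Injective (mapIncl (range f) (range g)) :=
    map_injective_of_flat_flat _ _ (Submodule.injective_subtype _) (Submodule.injective_subtype _)
  rw [hfactor, range_comp, range_eq_top.mpr
      (map_surjective f.surjective_rangeRestrict g.surjective_rangeRestrict),
    Submodule.map_top, finrank_range_of_inj hinj, Module.finrank_tensorProduct]

theorem Matrix.rank_kronecker {K m n p q : Type*} [Field K] [Fintype m] [Fintype n]
    [DecidableEq n] [Fintype p] [Fintype q] [DecidableEq q]
    (A : Matrix m n K) (B : Matrix p q K) : (A ⊗ₖ B).rank = A.rank * B.rank := by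
  classical
  rw [rank_eq_finrank_range_toLin (A ⊗ₖ B) ((Pi.basisFun K m).tensorProduct (Pi.basisFun K p))
      ((Pi.basisFun K n).tensorProduct (Pi.basisFun K q)),
    toLin_kronecker, LinearMap.finrank_range_map_tensorProduct,
    ← rank_eq_finrank_range_toLin, ← rank_eq_finrank_range_toLin]

theorem Matrix.kronecker_pow {R m n : Type*} [CommSemiring R] [Fintype m] [DecidableEq m]
    [Fintype n] [DecidableEq n] (A : Matrix m m R) (B : Matrix n n R) (k : ℕ) :
    (A ⊗ₖ B) ^ k = (A ^ k) ⊗ₖ (B ^ k) := by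
  induction k with
  | zero => rw [pow_zero, pow_zero, pow_zero, one_kronecker_one]
  | succ k ih => rw [pow_succ, pow_succ, pow_succ, ih, mul_kronecker_mul]

theorem Matrix.trace_reindex {R m n : Type*} [AddCommMonoid R] [Fintype m] [Fintype n]
    (e : m ≃ n) (M : Matrix m m R) : (reindex e e M).trace = M.trace :=
  e.symm.sum_comp fun i => M i i

theorem trPow_reindex {m p : Type*} [Fintype m] [DecidableEq m] [Fintype p] [DecidableEq p]
    (e : m ≃ p) (M : Matrix m m ℂ) (q : ℕ) : trPow (reindex e e M) q = trPow M q := by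
  rw [trPow, trPow, rank_reindex, ← coe_reindexAlgEquiv ℂ ℂ, ← map_pow,
    coe_reindexAlgEquiv, trace_reindex]

theorem trPow_kronecker {m n : Type*} [Fintype m] [DecidableEq m] [Fintype n] [DecidableEq n]
    (A : Matrix m m ℂ) (B : Matrix n n ℂ) (q : ℕ) :
    trPow (A ⊗ₖ B) q = trPow A q * trPow B q := by
  unfold trPow
  split_ifs
  · rw [rank_kronecker, Nat.cast_mul]
  · rw [kronecker_pow, trace_kronecker]

section Splitting

variable {ι : Type*} [Fintype ι] [DecidableEq ι] (Q : Finset ι)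

def finsetSplit : Finset ι ≃ Finset Q × Finset ↥Qᶜ where
  toFun T := (T.subtype (· ∈ Q), T.subtype (· ∈ Qᶜ))
  invFun p := p.1.map (.subtype _) ∪ p.2.map (.subtype _)
  left_inv T := by
    ext i
    by_cases hi : i ∈ Q <;> simp [hi]
  right_inv p := by
    ext x
    · simp [Finset.mem_compl.mp]
    · simp [Finset.mem_compl.mp x.2]

theorem card_eq_card_subtype_add_card_subtype (T : Finset ι) :
    T.card = (T.subtype (· ∈ Q)).card + (T.subtype (· ∈ Qᶜ)).card := by
  simp only [Finset.card_subtype, Finset.mem_compl, Finset.card_filter_add_card_filter_not]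

theorem sum_subsets_eq_mul_of_split {M : Type*} [CommSemiring M] (f : Finset ι → M)
    (g : Finset Q → M) (h : Finset ↥Qᶜ → M)
    (hfgh : ∀ T, f T = g (T.subtype (· ∈ Q)) * h (T.subtype (· ∈ Qᶜ))) :
    ∑ T, f T = (∑ A, g A) * ∑ B, h B := by
  rw [Finset.sum_mul_sum, ← Fintype.sum_prod_type', ← (finsetSplit Q).sum_comp]
  exact Finset.sum_congr rfl fun T _ => hfgh T

end Splitting

section Configurations

variable {ι : Type*} [Fintype ι] [DecidableEq ι] {n : ι → Type*} (Q : Finset ι)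

def configSplitEquiv (S : Finset ι) (A : Finset Q) (B : Finset ↥Qᶜ)
    (hA : ∀ x : Q, x ∈ A ↔ x.1 ∈ S) (hB : ∀ x : ↥Qᶜ, x ∈ B ↔ x.1 ∈ S) :
    (∀ s : S, n s.1) ≃ (∀ a : A, n a.1.1) × (∀ b : B, n b.1.1) where
  toFun x := (fun a => x ⟨a.1.1, (hA a.1).mp a.2⟩, fun b => x ⟨b.1.1, (hB b.1).mp b.2⟩)
  invFun y s := if h : s.1 ∈ Q then y.1 ⟨⟨s.1, h⟩, (hA ⟨s.1, h⟩).mpr s.2⟩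
    else y.2 ⟨⟨s.1, Finset.mem_compl.mpr h⟩, (hB ⟨s.1, Finset.mem_compl.mpr h⟩).mpr s.2⟩
  left_inv x := by
    funext s
    by_cases h : s.1 ∈ Q <;> simp [h]
  right_inv y := by
    ext a
    · simp [a.1.2]
    · simp [Finset.mem_compl.mp a.1.2]

def configEquiv (T : Finset ι) :
    (∀ t : T, n t.1) ≃
      (∀ a : T.subtype (· ∈ Q), n a.1.1) × (∀ b : T.subtype (· ∈ Qᶜ), n b.1.1) :=
  configSplitEquiv Q T _ _ (fun _ => Finset.mem_subtype) (fun _ => Finset.mem_subtype)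

def configEquivCompl (T : Finset ι) :
    (∀ t : ↥Tᶜ, n t.1) ≃
      (∀ a : ↥(T.subtype (· ∈ Q))ᶜ, n a.1.1) × (∀ b : ↥(T.subtype (· ∈ Qᶜ))ᶜ, n b.1.1) :=
  configSplitEquiv Q Tᶜ _ _ (fun _ => by simp) (fun _ => by simp)

theorem glueConfig_restrict_fst (T : Finset ι) (x : ∀ t : T, n t.1) (z : ∀ t : ↥Tᶜ, n t.1) :
    (fun j : Q => glueConfig T x z j.1) =
      glueConfig (T.subtype (· ∈ Q)) (configEquiv Q T x).1 (configEquivCompl Q T z).1 := by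
  funext j
  by_cases h : j.1 ∈ T <;> simp [glueConfig, configEquiv, configEquivCompl, configSplitEquiv, h]

theorem glueConfig_restrict_snd (T : Finset ι) (x : ∀ t : T, n t.1) (z : ∀ t : ↥Tᶜ, n t.1) :
    (fun j : ↥Qᶜ => glueConfig T x z j.1) =
      glueConfig (T.subtype (· ∈ Qᶜ)) (configEquiv Q T x).2 (configEquivCompl Q T z).2 := by
  funext j
  by_cases h : j.1 ∈ T <;> simp [glueConfig, configEquiv, configEquivCompl, configSplitEquiv, h]

theorem reduceState_eq_reindex_kronecker [∀ i, Fintype (n i)] [∀ i, DecidableEq (n i)]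
    {ρ : Matrix (∀ i, n i) (∀ i, n i) ℂ} {ρQ : Matrix (∀ t : Q, n t.1) (∀ t : Q, n t.1) ℂ}
    {ρR : Matrix (∀ t : ↥Qᶜ, n t.1) (∀ t : ↥Qᶜ, n t.1) ℂ}
    (hfact : ∀ x y : ∀ i, n i,
      ρ x y = ρQ (fun t => x t.1) (fun t => y t.1) * ρR (fun t => x t.1) (fun t => y t.1))
    (T : Finset ι) :
    reduceState ρ T = reindex (configEquiv Q T).symm (configEquiv Q T).symm
      (reduceState ρQ (T.subtype (· ∈ Q)) ⊗ₖ reduceState ρR (T.subtype (· ∈ Qᶜ))) := by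
  ext x y
  rw [reindex_apply, submatrix_apply, Equiv.symm_symm, kroneckerMap_apply, reduceState,
    reduceState, reduceState, of_apply, of_apply, of_apply, Finset.sum_mul_sum,
    ← Fintype.sum_prod_type', ← (configEquivCompl Q T).sum_comp]
  refine Finset.sum_congr rfl fun z _ => ?_
  rw [hfact, glueConfig_restrict_fst, glueConfig_restrict_fst, glueConfig_restrict_snd,
    glueConfig_restrict_snd]

end Configurations

theorem stateIndex_multiplicative_general
    {ι : Type*} [Fintype ι] [DecidableEq ι]
    {n : ι → Type*} [∀ i, Fintype (n i)] [∀ i, DecidableEq (n i)]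
    (Q : Finset ι)
    (ρ : Matrix (∀ i, n i) (∀ i, n i) ℂ)
    (ρQ : Matrix (∀ t : {i // i ∈ Q}, n t.1) (∀ t : {i // i ∈ Q}, n t.1) ℂ)
    (ρR : Matrix (∀ t : {i // i ∈ Qᶜ}, n t.1) (∀ t : {i // i ∈ Qᶜ}, n t.1) ℂ)
    (hfact : ∀ x y : ∀ i, n i,
      ρ x y = ρQ (fun t => x t.1) (fun t => y t.1) * ρR (fun t => x t.1) (fun t => y t.1))
    (α : ℂ) (q r : ℕ) :
    stateIndex ρ α q r = stateIndex ρQ α q r * stateIndex ρR α q r := by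
  refine sum_subsets_eq_mul_of_split Q _ _ _ fun T => ?_
  rw [card_eq_card_subtype_add_card_subtype Q T, pow_add, Fintype.card_congr (configEquiv Q T),
    Fintype.card_prod, Nat.cast_mul, Complex.natCast_mul_natCast_cpow,
    reduceState_eq_reindex_kronecker Q hfact, trPow_reindex, trPow_kronecker, mul_pow]
  ring

/-- Multiplicativity of the state index: if `ρ_P = ρ_Q ⊗ ρ_R` over a
disjoint union `P = Q ⊔ R`, then `X(ρ_P) = X(ρ_Q)·X(ρ_R)`. -/
theorem stateIndex_multiplicative
    {ι : Type*} [Fintype ι] [DecidableEq ι]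
    {n : ι → Type*} [∀ i, Fintype (n i)] [∀ i, DecidableEq (n i)]
    (Q : Finset ι)
    (ρ : Matrix (∀ i, n i) (∀ i, n i) ℂ)
    (ρQ : Matrix (∀ t : {i // i ∈ Q}, n t.1) (∀ t : {i // i ∈ Q}, n t.1) ℂ)
    (ρR : Matrix (∀ t : {i // i ∈ Qᶜ}, n t.1) (∀ t : {i // i ∈ Qᶜ}, n t.1) ℂ)
    (hρ : IsDensity ρ) (hρQ : IsDensity ρQ) (hρR : IsDensity ρR)
    (hfact : ∀ x y : ∀ i, n i,
      ρ x y = ρQ (fun t => x t.1) (fun t => y t.1) * ρR (fun t => x t.1) (fun t => y t.1))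
    (α : ℂ) (q r : ℕ) :
    stateIndex ρ α q r = stateIndex ρQ α q r * stateIndex ρR α q r :=
  stateIndex_multiplicative_general Q ρ ρQ ρR hfact α q r
end

section
/- Integral representation and bounds for the W-state mutual information coefficient: For every integer d ≥ 2, −log(∏_{j=0}^{d−1} (j+1)^{(−1)^j · C(d−1,j)}) = ∫_0^1 (−(1−u)^{d−1}/log u) du, i.e., Σ_{j=0}^{d−1} (−1)^{j+1} C(d−1,j) log(j+1) = ∫_0^1 (1−u)^{d−1}/(−log u) du; consequently 1/(d(d−1)) ≤ Σ_{j=0}^{d−1} (−1)^{j+1} C(d−1,j) log(j+1) ≤ 1/(d−1). -/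
/-!
Fubini applied to `∫₀¹ ∫₀ʲ u ^ s ds du` gives `log (j + 1) = ∫₀¹ (u ^ j - 1) / log u du`, and
summing these against `(-1) ^ (j + 1) C(d - 1, j)` collapses the integrand, by the binomial
theorem, to `(1 - u) ^ (d - 1) / (-log u)`. The bounds come from integrating
`u (1 - u) ^ (d - 2) ≤ (1 - u) ^ (d - 1) / (-log u) ≤ (1 - u) ^ (d - 2)`, which is
`1 - u ≤ -log u ≤ 1 / u - 1`.
-/

open MeasureTheory Set Real

theorem integral_const_rpow {u : ℝ} (hu₀ : 0 < u) (hu₁ : u ≠ 1) (c : ℝ) :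
    ∫ s in (0 : ℝ)..c, u ^ s = (u ^ c - 1) / log u := by
  have hlog : log u ≠ 0 := log_ne_zero_of_pos_of_ne_one hu₀ hu₁
  rw [intervalIntegral.integral_eq_sub_of_hasDerivAt (f := fun s => u ^ s / log u)
    (fun s _ => ?_) ((continuous_const_rpow hu₀.ne').intervalIntegrable _ _)]
  · simp [sub_div]
  · simpa [mul_div_assoc, hlog] using
      (hasStrictDerivAt_const_rpow hu₀ s).hasDerivAt.div_const (log u)

theorem integrable_rpow_restrict_Ioc_prod (c : ℝ) :
    Integrable (Function.uncurry fun u s : ℝ => u ^ s)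
      ((volume.restrict (Ioc 0 1)).prod (volume.restrict (Ioc 0 c))) := by
  rw [Measure.prod_restrict, ← Measure.volume_eq_prod]
  refine Measure.integrableOn_of_bounded (M := 1) ?_
    (measurable_fst.pow measurable_snd).aestronglyMeasurable ?_
  · rw [Measure.volume_eq_prod, Measure.prod_prod]
    exact ENNReal.mul_ne_top (by simp) (by simp)
  · filter_upwards [ae_restrict_mem (measurableSet_Ioc.prod measurableSet_Ioc)] with p hp
    change ‖p.1 ^ p.2‖ ≤ 1
    rw [Real.norm_of_nonneg (rpow_nonneg hp.1.1.le _)]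
    exact rpow_le_one hp.1.1.le hp.1.2 hp.2.1.le

theorem integral_Ioc_const_rpow_ae_eq {c : ℝ} (hc : 0 ≤ c) :
    (fun u : ℝ => ∫ s in Ioc 0 c, u ^ s) =ᵐ[volume.restrict (Ioc 0 1)]
      fun u => (u ^ c - 1) / log u := by
  filter_upwards [ae_restrict_mem measurableSet_Ioc,
    ae_restrict_of_ae (Measure.ae_ne volume 1)] with u hu hu₁
  rw [← intervalIntegral.integral_of_le hc, integral_const_rpow hu.1 hu₁]

theorem intervalIntegrable_rpow_sub_one_div_log {c : ℝ} (hc : 0 ≤ c) :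
    IntervalIntegrable (fun u : ℝ => (u ^ c - 1) / log u) volume 0 1 :=
  (intervalIntegrable_iff_integrableOn_Ioc_of_le zero_le_one).2 <|
    (integrable_rpow_restrict_Ioc_prod c).integral_prod_left.congr
      (integral_Ioc_const_rpow_ae_eq hc)

theorem integral_rpow_sub_one_div_log {c : ℝ} (hc : 0 ≤ c) :
    ∫ u in (0 : ℝ)..1, (u ^ c - 1) / log u = log (c + 1) := by
  have hinner : ∀ s ∈ Ioc 0 c, ∫ u in Ioc (0 : ℝ) 1, u ^ s = (s + 1)⁻¹ := fun s hs => by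
    rw [← intervalIntegral.integral_of_le zero_le_one, integral_rpow (Or.inl (by linarith [hs.1]))]
    simp [zero_rpow (by linarith [hs.1] : s + 1 ≠ 0)]
  rw [intervalIntegral.integral_of_le zero_le_one,
    ← integral_congr_ae (integral_Ioc_const_rpow_ae_eq hc),
    integral_integral_swap (integrable_rpow_restrict_Ioc_prod c),
    setIntegral_congr_fun measurableSet_Ioc hinner, ← intervalIntegral.integral_of_le hc,
    intervalIntegral.integral_comp_add_right (fun s => s⁻¹), zero_add,
    integral_inv_of_pos one_pos (by linarith), div_one]

theorem sum_range_neg_one_pow_mul_choose_mul_pow {R : Type*} [CommRing R] (m : ℕ) (x : R) :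
    ∑ j ∈ Finset.range (m + 1), (-1) ^ j * (m.choose j : R) * x ^ j = (1 - x) ^ m := by
  rw [sub_eq_neg_add, add_pow]
  refine Finset.sum_congr rfl fun j _ => ?_
  rw [neg_pow, one_pow]
  ring

theorem sum_range_neg_one_pow_succ_mul_choose_mul_pow_sub_one {R : Type*} [CommRing R] {m : ℕ}
    (hm : m ≠ 0) (x : R) :
    ∑ j ∈ Finset.range (m + 1), (-1) ^ (j + 1) * (m.choose j : R) * (x ^ j - 1) =
      -(1 - x) ^ m := by
  have h := sum_range_neg_one_pow_mul_choose_mul_pow m x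
  have h₁ := sum_range_neg_one_pow_mul_choose_mul_pow m (1 : R)
  simp only [one_pow, mul_one, sub_self, zero_pow hm] at h₁
  simp only [pow_succ, mul_sub, Finset.sum_sub_distrib, mul_one, mul_neg_one, neg_mul,
    Finset.sum_neg_distrib, h₁, h, neg_zero, sub_zero]

theorem one_sub_pow_div_neg_log_eq_sum {m : ℕ} (hm : m ≠ 0) (u : ℝ) :
    (1 - u) ^ m / -log u =
      ∑ j ∈ Finset.range (m + 1), (-1) ^ (j + 1) * (m.choose j : ℝ) * ((u ^ j - 1) / log u) := by
  simp only [← mul_div_assoc, ← Finset.sum_div,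
    sum_range_neg_one_pow_succ_mul_choose_mul_pow_sub_one hm, div_neg, neg_div]

theorem one_sub_div_neg_log_mem_Icc {u : ℝ} (hu : u ∈ Ioo 0 1) :
    (1 - u) / -log u ∈ Icc u 1 := by
  have hlog : 0 < -log u := neg_pos.mpr (log_neg hu.1 hu.2)
  refine ⟨(le_div_iff₀ hlog).mpr ?_, (div_le_one hlog).mpr ?_⟩
  · have := one_sub_inv_le_log_of_pos hu.1
    have : u * u⁻¹ = 1 := mul_inv_cancel₀ hu.1.ne'
    nlinarith
  · linarith [log_le_sub_one_of_pos hu.1]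

theorem integral_one_sub_pow (k : ℕ) : ∫ u in (0 : ℝ)..1, (1 - u) ^ k = 1 / (k + 1) := by
  simp [intervalIntegral.integral_comp_sub_left fun x : ℝ => x ^ k]

theorem intervalIntegrable_pow_sub_one_div_log (n : ℕ) :
    IntervalIntegrable (fun u : ℝ => (u ^ n - 1) / log u) volume 0 1 := by
  simpa using intervalIntegrable_rpow_sub_one_div_log (Nat.cast_nonneg n)

theorem intervalIntegrable_one_sub_pow_div_neg_log {m : ℕ} (hm : m ≠ 0) :
    IntervalIntegrable (fun u : ℝ => (1 - u) ^ m / -log u) volume 0 1 := by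
  simp_rw [one_sub_pow_div_neg_log_eq_sum hm]
  simpa only [Finset.sum_fn] using
    IntervalIntegrable.sum _ fun j _ => (intervalIntegrable_pow_sub_one_div_log j).const_mul _

theorem integral_one_sub_pow_div_neg_log {m : ℕ} (hm : m ≠ 0) :
    ∫ u in (0 : ℝ)..1, (1 - u) ^ m / -log u =
      ∑ j ∈ Finset.range (m + 1), (-1) ^ (j + 1) * (m.choose j : ℝ) * log (j + 1) := by
  simp_rw [one_sub_pow_div_neg_log_eq_sum hm]
  rw [intervalIntegral.integral_finsetSum fun j _ =>
    (intervalIntegrable_pow_sub_one_div_log j).const_mul _]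
  refine Finset.sum_congr rfl fun j _ => ?_
  rw [intervalIntegral.integral_const_mul, ← integral_rpow_sub_one_div_log (Nat.cast_nonneg j)]
  simp_rw [rpow_natCast]

theorem integral_one_sub_pow_succ_div_neg_log_le (k : ℕ) :
    ∫ u in (0 : ℝ)..1, (1 - u) ^ (k + 1) / -log u ≤ 1 / (k + 1) := by
  rw [← integral_one_sub_pow k]
  refine intervalIntegral.integral_mono_on_of_le_Ioo zero_le_one
    (intervalIntegrable_one_sub_pow_div_neg_log k.succ_ne_zero)
    (by apply Continuous.intervalIntegrable; fun_prop) fun u hu => ?_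
  rw [pow_succ, mul_div_assoc]
  exact mul_le_of_le_one_right (pow_nonneg (by linarith [hu.2]) _)
    (one_sub_div_neg_log_mem_Icc hu).2

theorem integral_mul_one_sub_pow (k : ℕ) :
    ∫ u in (0 : ℝ)..1, u * (1 - u) ^ k = 1 / ((k + 1) * (k + 2)) := by
  have h (u : ℝ) : u * (1 - u) ^ k = (1 - u) ^ k - (1 - u) ^ (k + 1) := by ring
  simp_rw [h]
  rw [intervalIntegral.integral_sub (by apply Continuous.intervalIntegrable; fun_prop)
    (by apply Continuous.intervalIntegrable; fun_prop), integral_one_sub_pow, integral_one_sub_pow]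
  push_cast
  field_simp
  ring

theorem one_div_mul_le_integral_one_sub_pow_succ_div_neg_log (k : ℕ) :
    1 / ((k + 1) * (k + 2)) ≤ ∫ u in (0 : ℝ)..1, (1 - u) ^ (k + 1) / -log u := by
  rw [← integral_mul_one_sub_pow k]
  refine intervalIntegral.integral_mono_on_of_le_Ioo zero_le_one
    (by apply Continuous.intervalIntegrable; fun_prop)
    (intervalIntegrable_one_sub_pow_div_neg_log k.succ_ne_zero) fun u hu => ?_
  rw [pow_succ, mul_div_assoc, mul_comm]
  exact mul_le_mul_of_nonneg_left (one_sub_div_neg_log_mem_Icc hu).1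
    (pow_nonneg (by linarith [hu.2]) _)

/-- Integral representation and bounds for the W-state mutual
information coefficient: for `d ≥ 2`,
`Σ_{j=0}^{d-1} (-1)^{j+1} C(d-1,j) log(j+1) = ∫_0^1 (1-u)^{d-1}/(-log u) du`, and
`1/(d(d-1)) ≤ Σ_{j=0}^{d-1} (-1)^{j+1} C(d-1,j) log(j+1) ≤ 1/(d-1)`. -/
theorem w_state_integral_and_bounds (d : ℕ) (hd : 2 ≤ d) :
    (∑ j ∈ Finset.range d, (-1 : ℝ) ^ (j + 1) * ((d - 1).choose j : ℝ) *
        Real.log ((j : ℝ) + 1) =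
      ∫ u in (0 : ℝ)..1, (1 - u) ^ (d - 1) / (-Real.log u)) ∧
    1 / ((d : ℝ) * ((d : ℝ) - 1)) ≤
      ∑ j ∈ Finset.range d, (-1 : ℝ) ^ (j + 1) * ((d - 1).choose j : ℝ) *
        Real.log ((j : ℝ) + 1) ∧
    ∑ j ∈ Finset.range d, (-1 : ℝ) ^ (j + 1) * ((d - 1).choose j : ℝ) *
        Real.log ((j : ℝ) + 1) ≤ 1 / ((d : ℝ) - 1) := by
  obtain ⟨m, rfl⟩ : ∃ m, d = m + 1 := ⟨d - 1, by omega⟩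
  rw [Nat.add_sub_cancel]
  have hsum := (integral_one_sub_pow_div_neg_log (m := m) (by omega)).symm
  obtain ⟨k, rfl⟩ : ∃ k, m = k + 1 := ⟨m - 1, by omega⟩
  refine ⟨hsum, ?_, ?_⟩
  · rw [hsum]
    convert one_div_mul_le_integral_one_sub_pow_succ_div_neg_log k using 2
    push_cast
    ring
  · rw [hsum]
    convert integral_one_sub_pow_succ_div_neg_log_le k using 2
    push_cast
    ring
end
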